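/- arXiv:1910.10643 — 4 statements merged into one kernel-verified Lean document; each statement's English description precedes it below -/
import Mathlib

section
/- Let G be the complete p-partite graph K_{r,...,r} with p parts each of size r (p, r ≥ 2). For any integer q with 1 ≤ q ≤ r, the maximum number of edges in an induced subgraph of G on qp vertices equals q²p(p-1)/2. -/
/-- The complete `p`-partite graph `K_{r,...,r}` with `p` parts of size `r`:
vertices are pairs `(part, index)`, and two vertices are adjacent iff they lie
in different parts. -/
def completeEqPartite (p r : ℕ) : SimpleGraph (Fin p × Fin r) where
  Adj u v := u.1 ≠ v.1
  symm := ⟨fun _ _ h => Ne.symm h⟩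
  loopless := ⟨fun _ h => h rfl⟩

instance (p r : ℕ) : DecidableRel (completeEqPartite p r).Adj :=
  fun u v => inferInstanceAs (Decidable (u.1 ≠ v.1))

/-- The number of edges of `G` with both endpoints in `A`
(counted via ordered pairs, divided by 2). -/
def edgesIn {V : Type*} [Fintype V] [DecidableEq V] (G : SimpleGraph V)
    [DecidableRel G.Adj] (A : Finset V) : ℕ :=
  (Finset.univ.filter
    (fun pr : V × V => pr.1 ∈ A ∧ pr.2 ∈ A ∧ G.Adj pr.1 pr.2)).card / 2

/-- `E_G(k)`: the maximum number of edges in an induced subgraph on `k` vertices. -/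
def maxEdges {V : Type*} [Fintype V] [DecidableEq V] (G : SimpleGraph V)
    [DecidableRel G.Adj] (k : ℕ) : ℕ :=
  (Finset.powersetCard k (Finset.univ : Finset V)).sup (edgesIn G)

/-!
If `A` meets part `i` in `aᵢ` vertices, the ordered pairs of `A` lying in different parts number
`|A|² - ∑ aᵢ²`. For `|A| = qp` Cauchy–Schwarz gives `∑ aᵢ² ≥ q²p`, with equality when every
`aᵢ = q`; since `q ≤ r`, this is realised by taking the same `q` indices in every part.
-/

open Finset

section Fibres

variable {α ι : Type*} [Fintype ι] [DecidableEq ι]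

lemma card_filter_product_comp_eq (f : α → ι) (A : Finset α) :
    #{x ∈ A ×ˢ A | f x.1 = f x.2} = ∑ i, #{a ∈ A | f a = i} ^ 2 := by
  rw [card_eq_sum_card_fiberwise (f := fun x => f x.1) (t := univ) fun _ _ => mem_univ _]
  refine sum_congr rfl fun i _ => ?_
  rw [sq, ← card_product, filter_filter]
  congr 1
  ext x
  simp only [mem_filter, mem_product]
  grind

lemma card_filter_product_comp_ne (f : α → ι) (A : Finset α) :
    #{x ∈ A ×ˢ A | f x.1 ≠ f x.2} = #A ^ 2 - ∑ i, #{a ∈ A | f a = i} ^ 2 := by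
  have h := card_filter_add_card_filter_not (s := A ×ˢ A) fun x => f x.1 = f x.2
  rw [card_filter_product_comp_eq, card_product, ← sq] at h
  simp only [ne_eq]
  omega

lemma sum_card_filter_comp_eq (f : α → ι) (A : Finset α) :
    ∑ i, #{a ∈ A | f a = i} = #A :=
  (card_eq_sum_card_fiberwise fun _ _ => mem_univ _).symm

end Fibres

lemma sq_mul_le_sum_sq_of_sum_eq {ι : Type*} (s : Finset ι) (a : ι → ℕ) (q : ℕ)
    (h : ∑ i ∈ s, a i = q * #s) : q ^ 2 * #s ≤ ∑ i ∈ s, a i ^ 2 := by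
  rcases (#s).eq_zero_or_pos with hs | hs
  · simp [hs]
  have hcs := sq_sum_le_card_mul_sum_sq (s := s) (f := a)
  rw [h] at hcs
  exact Nat.le_of_mul_le_mul_left (by nlinarith) hs

lemma sq_mul_sub_sq_mul (q p : ℕ) : (q * p) ^ 2 - q ^ 2 * p = q ^ 2 * p * (p - 1) := by
  rw [Nat.mul_sub_one, mul_pow, sq p, ← mul_assoc]

lemma edgesIn_completeEqPartite (p r : ℕ) (A : Finset (Fin p × Fin r)) :
    edgesIn (completeEqPartite p r) A = (#A ^ 2 - ∑ i, #{v ∈ A | v.1 = i} ^ 2) / 2 := by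
  rw [edgesIn, ← card_filter_product_comp_ne Prod.fst]
  congr 2
  ext x
  simp only [mem_filter, mem_univ, true_and, mem_product]
  exact and_assoc.symm

lemma edgesIn_completeEqPartite_le (p r q : ℕ) (A : Finset (Fin p × Fin r))
    (hA : #A = q * p) : edgesIn (completeEqPartite p r) A ≤ q ^ 2 * p * (p - 1) / 2 := by
  have h := sq_mul_le_sum_sq_of_sum_eq univ (fun i => #{v ∈ A | v.1 = i}) q
    (by simpa [hA] using sum_card_filter_comp_eq Prod.fst A)
  rw [card_univ, Fintype.card_fin] at h
  rw [edgesIn_completeEqPartite, hA, ← sq_mul_sub_sq_mul]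
  gcongr

lemma edgesIn_completeEqPartite_univ_product (p r : ℕ) (T : Finset (Fin r)) :
    edgesIn (completeEqPartite p r) (univ ×ˢ T) = #T ^ 2 * p * (p - 1) / 2 := by
  have hfibre (i : Fin p) : #{v ∈ univ ×ˢ T | v.1 = i} = #T := by
    have : {v ∈ (univ : Finset (Fin p)) ×ˢ T | v.1 = i} = {i} ×ˢ T := by
      ext v
      simp only [mem_filter, mem_product, mem_univ, mem_singleton, true_and, and_comm]
    rw [this, card_product, card_singleton, one_mul]
  simp only [edgesIn_completeEqPartite, hfibre, card_product, card_univ, Fintype.card_fin,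
    sum_const, smul_eq_mul, ← sq_mul_sub_sq_mul]
  ring_nf

theorem stmt1_general (p r q : ℕ) (hq2 : q ≤ r) :
    maxEdges (completeEqPartite p r) (q * p) = q ^ 2 * p * (p - 1) / 2 := by
  refine le_antisymm
    (Finset.sup_le fun A hA => edgesIn_completeEqPartite_le p r q A (mem_powersetCard.1 hA).2) ?_
  obtain ⟨T, -, rfl⟩ := exists_subset_card_eq (s := (univ : Finset (Fin r))) (by simpa using hq2)
  rw [← edgesIn_completeEqPartite_univ_product]
  exact Finset.le_sup (mem_powersetCard.2 ⟨subset_univ _, by simp [mul_comm]⟩)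

theorem stmt1 (p r q : ℕ) (hp : 2 ≤ p) (hr : 2 ≤ r) (hq1 : 1 ≤ q) (hq2 : q ≤ r) :
    maxEdges (completeEqPartite p r) (q * p) = q ^ 2 * p * (p - 1) / 2 :=
  stmt1_general p r q hq2
end

section
/- Let G be the complete p-partite graph K_{r,...,r} with p, r ≥ 2. A subset H of V(G) of size qp (1 ≤ q ≤ r) achieves the maximum number of induced edges among all subsets of its size if H consists of exactly q vertices from each of the p parts. -/
/-!
In a complete multipartite graph the ordered pairs of distinct-part vertices of `B` are all pairs
of `B` minus the pairs inside a part, so twice the number of edges induced by `B` is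
`|B|² - ∑ₜ |B ∩ Vₜ|²`. For fixed `|B| = pq` the sum of squares of the `p` part sizes is
minimised when they are all equal to `q`, since `∑ₜ (|B ∩ Vₜ| - q)² ≥ 0`.
-/

open Finset

lemma card_mul_sq_le_sum_sq {ι : Type*} (s : Finset ι) (f : ι → ℕ) (q : ℕ)
    (hsum : ∑ i ∈ s, f i = #s * q) : #s * q ^ 2 ≤ ∑ i ∈ s, f i ^ 2 := by
  have hsq : 0 ≤ ∑ i ∈ s, ((f i : ℤ) - q) ^ 2 := sum_nonneg fun _ _ => sq_nonneg _
  have hsumℤ : ∑ i ∈ s, (f i : ℤ) = #s * q := by exact_mod_cast hsum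
  simp only [sub_sq, sum_add_distrib, sum_sub_distrib, ← sum_mul, ← mul_sum, hsumℤ,
    sum_const, nsmul_eq_mul] at hsq
  zify
  nlinarith

lemma card_filter_eq_eq_sum_sq {V ι : Type*} [Fintype ι] [DecidableEq ι] (f : V → ι)
    (B : Finset V) :
    #((B ×ˢ B).filter fun pr => f pr.1 = f pr.2) = ∑ t, #(B.filter (f · = t)) ^ 2 := by
  rw [card_eq_sum_card_fiberwise (f := fun pr : V × V => f pr.1) (t := univ)
    fun _ _ => mem_univ _]
  refine sum_congr rfl fun t _ => ?_
  rw [filter_filter, sq, ← card_product]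
  congr 1
  ext ⟨u, v⟩
  simp only [mem_filter, mem_product]
  constructor
  · rintro ⟨⟨hu, hv⟩, huv, rfl⟩
    exact ⟨⟨hu, rfl⟩, hv, huv.symm⟩
  · rintro ⟨⟨hu, rfl⟩, hv, hvu⟩
    exact ⟨⟨hu, hv⟩, hvu.symm, rfl⟩

section Multipartite

variable {V ι : Type*} [Fintype V] [DecidableEq V] [Fintype ι] [DecidableEq ι]

def adjPairs (G : SimpleGraph V) [DecidableRel G.Adj] (B : Finset V) : Finset (V × V) :=
  univ.filter fun pr => pr.1 ∈ B ∧ pr.2 ∈ B ∧ G.Adj pr.1 pr.2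

lemma card_adjPairs_add_sum_sq (G : SimpleGraph V) [DecidableRel G.Adj] (f : V → ι)
    (hG : ∀ u v, G.Adj u v ↔ f u ≠ f v) (B : Finset V) :
    #(adjPairs G B) + ∑ t, #(B.filter (f · = t)) ^ 2 = #B ^ 2 := by
  have hpairs : adjPairs G B = (B ×ˢ B).filter fun pr => ¬ f pr.1 = f pr.2 := by
    ext pr
    simp [adjPairs, hG, and_assoc]
  rw [hpairs, ← card_filter_eq_eq_sum_sq, add_comm, card_filter_add_card_filter_not,
    card_product, sq]

lemma card_adjPairs_le_of_fiber_card_eq (G : SimpleGraph V) [DecidableRel G.Adj] (f : V → ι)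
    (hG : ∀ u v, G.Adj u v ↔ f u ≠ f v) (A B : Finset V) (q : ℕ)
    (hA : ∀ t, #(A.filter (f · = t)) = q) (hB : #B = #A) :
    #(adjPairs G B) ≤ #(adjPairs G A) := by
  have hcard : ∀ C : Finset V, #C = ∑ t, #(C.filter (f · = t)) := fun C =>
    card_eq_sum_card_fiberwise fun _ _ => mem_univ _
  have hcardA : #A = Fintype.card ι * q := by simp [hcard A, hA]
  have hsumB : ∑ t, #(B.filter (f · = t)) = #(univ : Finset ι) * q := by
    rw [← hcard, hB, hcardA, card_univ]
  have hsqB := card_mul_sq_le_sum_sq univ _ q hsumB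
  have hA' := card_adjPairs_add_sum_sq G f hG A
  have hB' := card_adjPairs_add_sum_sq G f hG B
  simp only [hA, sum_const, smul_eq_mul] at hA' hsqB
  rw [hB] at hB'
  omega

end Multipartite

theorem stmt3_general (p r q : ℕ)
    (A : Finset (Fin p × Fin r))
    (hA : ∀ t : Fin p, (A.filter (fun v => v.1 = t)).card = q) :
    ∀ B : Finset (Fin p × Fin r), B.card = A.card →
      edgesIn (completeEqPartite p r) B ≤ edgesIn (completeEqPartite p r) A := by
  intro B hB
  exact Nat.div_le_div_right <| card_adjPairs_le_of_fiber_card_eq (completeEqPartite p r)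
    Prod.fst (fun _ _ => Iff.rfl) A B q hA hB

theorem stmt3 (p r q : ℕ) (hp : 2 ≤ p) (hr : 2 ≤ r) (hq1 : 1 ≤ q) (hq2 : q ≤ r)
    (A : Finset (Fin p × Fin r))
    (hA : ∀ t : Fin p, (A.filter (fun v => v.1 = t)).card = q) :
    ∀ B : Finset (Fin p × Fin r), B.card = A.card →
      edgesIn (completeEqPartite p r) B ≤ edgesIn (completeEqPartite p r) A :=
  stmt3_general p r q A hA
end

section
/- Let G = K_{2^{n−p},…,2^{n−p}} be the complete 2^p-partite graph on 2^n vertices with parts of size 2^{n−p} (p, n ≥ 2), and let A be a subset of V(G) of size 2^j − 1 that maximizes the number of induced edges among subsets of its size. Then the number of edges of G with exactly one endpoint in A equals (2^j−1)(2^{n−p}(2^p−1)−(2^j−2)) if j ≤ p, and (2^p−1)(2^{n−p}(2^j−1)−2^{j−p}(2^j−2)) if j > p. -/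
/-- The edge boundary of `A`: edges with exactly one endpoint in `A`, counted as
ordered adjacent pairs `(u, v)` with `u ∈ A`, `v ∉ A`. -/
def edgeBoundary {V : Type*} [Fintype V] [DecidableEq V] (G : SimpleGraph V)
    [DecidableRel G.Adj] (A : Finset V) : ℕ :=
  (Finset.univ.filter
    (fun pr : V × V => G.Adj pr.1 pr.2 ∧ pr.1 ∈ A ∧ pr.2 ∉ A)).card

/-!
In `K_{r,…,r}` with `t` parts, a set `A` with part sizes `aᵢ` spans `#A² - ∑ aᵢ²` ordered
adjacent pairs and every vertex has degree `(t - 1) r`, so `|∂A| = #A (t - 1) r - #A² + ∑ aᵢ²`.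
Optimal sets therefore minimise `∑ aᵢ²` for fixed `∑ aᵢ`. As `(a - m)(a - m - 1) ≥ 0` for
integers, this minimum is `t m² + s (2m + 1)` when `#A = t m + s` with `s ≤ t`, `m < r`, and it
is attained by the balanced distribution. For `#A = 2^j - 1` take `(m, s) = (0, 2^j - 1)` if
`j ≤ p` and `(2^(j-p) - 1, 2^p - 1)` otherwise.
-/

open Finset

lemma two_mul_add_one_mul_sum_le {ι : Type*} (s : Finset ι) (a : ι → ℕ) (m : ℕ) :
    (2 * m + 1) * ∑ i ∈ s, a i ≤ ∑ i ∈ s, a i ^ 2 + #s * (m * (m + 1)) := by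
  have hterm (x : ℕ) : (2 * m + 1) * x ≤ x ^ 2 + m * (m + 1) := by
    rcases le_or_gt x m with h | h <;> nlinarith
  calc (2 * m + 1) * ∑ i ∈ s, a i = ∑ i ∈ s, (2 * m + 1) * a i := mul_sum _ _ _
    _ ≤ ∑ i ∈ s, (a i ^ 2 + m * (m + 1)) := sum_le_sum fun i _ => hterm (a i)
    _ = ∑ i ∈ s, a i ^ 2 + #s * (m * (m + 1)) := by rw [sum_add_distrib, sum_const, smul_eq_mul]

lemma Fin.sum_ite_val_lt {M : Type*} [AddCommMonoid M] {t s : ℕ} (hs : s ≤ t) (x y : M) :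
    ∑ i : Fin t, (if (i : ℕ) < s then x else y) = s • x + (t - s) • y := by
  have hsplit := card_filter_add_card_filter_not (s := (univ : Finset (Fin t)))
    fun i => (i : ℕ) < s
  rw [Fin.card_filter_val_lt, min_eq_right hs, card_univ, Fintype.card_fin] at hsplit
  rw [sum_ite, Finset.sum_const, Finset.sum_const, Fin.card_filter_val_lt, min_eq_right hs]
  congr
  omega

section Graph

variable {V : Type*} [Fintype V] [DecidableEq V]

lemma card_filter_fst_mem_and (A : Finset V) (P : V → V → Prop) [∀ v w, Decidable (P v w)] :
    #{pr : V × V | pr.1 ∈ A ∧ P pr.1 pr.2} = ∑ v ∈ A, #{w | P v w} := by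
  simp only [card_filter, Fintype.sum_prod_type, ite_and, ← ite_sum_zero, Fintype.sum_ite_mem]

def dartsIn (G : SimpleGraph V) [DecidableRel G.Adj] (A : Finset V) : ℕ :=
  #{pr : V × V | pr.1 ∈ A ∧ pr.2 ∈ A ∧ G.Adj pr.1 pr.2}

lemma edgesIn_eq_dartsIn_div_two (G : SimpleGraph V) [DecidableRel G.Adj] (A : Finset V) :
    edgesIn G A = dartsIn G A / 2 := rfl

lemma edgeBoundary_add_dartsIn (G : SimpleGraph V) [DecidableRel G.Adj] (A : Finset V) :
    edgeBoundary G A + dartsIn G A = ∑ v ∈ A, G.degree v := by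
  have hsplit (v : V) : #{w | G.Adj v w ∧ w ∉ A} + #{w | w ∈ A ∧ G.Adj v w} = G.degree v := by
    rw [← G.card_neighborFinset_eq_degree, G.neighborFinset_eq_filter, add_comm,
      ← card_filter_add_card_filter_not (s := {w | G.Adj v w}) (· ∈ A), filter_filter,
      filter_filter]
    simp only [and_comm]
  simp only [edgeBoundary, dartsIn, and_left_comm (a := G.Adj _ _)]
  rw [card_filter_fst_mem_and A (fun v w => G.Adj v w ∧ w ∉ A),
    card_filter_fst_mem_and A (fun _ w => w ∈ A ∧ _), ← sum_add_distrib]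
  exact sum_congr rfl fun v _ => hsplit v

end Graph

namespace completeEqPartite

variable {t r : ℕ}

def partSize (A : Finset (Fin t × Fin r)) (i : Fin t) : ℕ := #{v ∈ A | v.1 = i}

lemma sum_partSize (A : Finset (Fin t × Fin r)) : ∑ i, partSize A i = #A :=
  (card_eq_sum_card_fiberwise fun v _ => mem_univ v.1).symm

lemma partSize_univ (i : Fin t) : partSize (univ : Finset (Fin t × Fin r)) i = r := by
  have : ({v ∈ univ | v.1 = i} : Finset (Fin t × Fin r)) = {i} ×ˢ univ := by
    ext ⟨a, b⟩; simp [eq_comm]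
  rw [partSize, this, card_product, card_singleton, card_univ, Fintype.card_fin, one_mul]

lemma exists_partSize_eq (c : Fin t → ℕ) (hc : ∀ i, c i ≤ r) :
    ∃ B : Finset (Fin t × Fin r), ∀ i, partSize B i = c i := by
  refine ⟨({v | (v.2 : ℕ) < c v.1} : Finset (Fin t × Fin r)), fun i => ?_⟩
  have hfiber : #{v : Fin t × Fin r | (v.2 : ℕ) < c v.1 ∧ v.1 = i} =
      #(({i} : Finset (Fin t)) ×ˢ ({x | (x : ℕ) < c i} : Finset (Fin r))) := by
    congr 1
    ext ⟨a, b⟩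
    simp only [mem_filter, mem_univ, true_and, mem_product, mem_singleton]
    exact ⟨fun ⟨hb, ha⟩ => ⟨ha, ha ▸ hb⟩, fun ⟨ha, hb⟩ => ⟨ha ▸ hb, ha⟩⟩
  rw [partSize, filter_filter, hfiber, card_product, card_singleton, one_mul,
    Fin.card_filter_val_lt, min_eq_right (hc i)]

lemma degree_eq (v : Fin t × Fin r) : (completeEqPartite t r).degree v = (t - 1) * r := by
  have hsplit := card_filter_add_card_filter_not (s := (univ : Finset (Fin t × Fin r)))
    (·.1 = v.1)
  rw [← partSize, partSize_univ, card_univ, Fintype.card_prod, Fintype.card_fin,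
    Fintype.card_fin] at hsplit
  have hdeg : (completeEqPartite t r).degree v = #{w : Fin t × Fin r | ¬w.1 = v.1} := by
    rw [← SimpleGraph.card_neighborFinset_eq_degree, SimpleGraph.neighborFinset_eq_filter]
    congr 1
    ext w
    simp only [mem_filter, mem_univ, true_and]
    exact ne_comm
  rw [hdeg, tsub_one_mul]
  omega

lemma dartsIn_add_sum_sq (A : Finset (Fin t × Fin r)) :
    dartsIn (completeEqPartite t r) A + ∑ i, partSize A i ^ 2 = #A ^ 2 := by
  have hrow (v : Fin t × Fin r) :
      #{w | w ∈ A ∧ (completeEqPartite t r).Adj v w} + partSize A v.1 = #A := by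
    rw [partSize, ← card_filter_add_card_filter_not (s := A) (·.1 = v.1), add_comm]
    congr 2
    ext w
    simp only [mem_filter, mem_univ, true_and]
    exact and_congr_right fun _ => ne_comm
  have hsame : ∑ v ∈ A, partSize A v.1 = ∑ i, partSize A i ^ 2 := by
    rw [← sum_fiberwise' A Prod.fst (partSize A)]
    simp only [sum_const, smul_eq_mul, sq, partSize]
  rw [dartsIn, card_filter_fst_mem_and A (fun _ w => w ∈ A ∧ _), ← hsame, ← sum_add_distrib,
    sum_congr rfl fun v _ => hrow v, sum_const, smul_eq_mul, sq]

lemma edgeBoundary_add_sq_card (A : Finset (Fin t × Fin r)) :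
    edgeBoundary (completeEqPartite t r) A + #A ^ 2 =
      #A * ((t - 1) * r) + ∑ i, partSize A i ^ 2 := by
  have hdarts := dartsIn_add_sum_sq A
  have hboundary := edgeBoundary_add_dartsIn (completeEqPartite t r) A
  simp only [degree_eq, sum_const, smul_eq_mul] at hboundary
  omega

lemma even_dartsIn (A : Finset (Fin t × Fin r)) : Even (dartsIn (completeEqPartite t r) A) := by
  have h := congrArg (Nat.cast : ℕ → ZMod 2) (dartsIn_add_sum_sq A)
  rw [← sum_partSize A] at h
  push_cast [ZMod.pow_card] at h
  rw [even_iff_two_dvd, ← ZMod.natCast_eq_zero_iff]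
  simpa using h

-- `edgesIn` halves `dartsIn` with floor division, hence the parity of `dartsIn B`.
lemma sum_sq_partSize_le_of_edgesIn_le {A B : Finset (Fin t × Fin r)} (hcard : #B = #A)
    (hedges : edgesIn (completeEqPartite t r) B ≤ edgesIn (completeEqPartite t r) A) :
    ∑ i, partSize A i ^ 2 ≤ ∑ i, partSize B i ^ 2 := by
  have hA := dartsIn_add_sum_sq A
  have hB := dartsIn_add_sum_sq B
  obtain ⟨b, hb⟩ := even_dartsIn B
  rw [hcard] at hB
  rw [edgesIn_eq_dartsIn_div_two, edgesIn_eq_dartsIn_div_two] at hedges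
  omega

theorem sum_sq_partSize_of_optimal {A : Finset (Fin t × Fin r)} {m s : ℕ} (hs : s ≤ t)
    (hm : m < r) (hA : #A = t * m + s)
    (hopt : ∀ B : Finset (Fin t × Fin r), #B = #A →
      edgesIn (completeEqPartite t r) B ≤ edgesIn (completeEqPartite t r) A) :
    ∑ i, partSize A i ^ 2 = t * m ^ 2 + s * (2 * m + 1) := by
  apply le_antisymm
  · obtain ⟨B, hB⟩ := exists_partSize_eq (r := r)
      (fun i : Fin t => if (i : ℕ) < s then m + 1 else m) fun i => by split_ifs <;> omega
    have hBcard : #B = #A := by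
      rw [← sum_partSize, hA]
      simp only [hB, Fin.sum_ite_val_lt hs, smul_eq_mul]
      zify [hs]
      ring
    calc ∑ i, partSize A i ^ 2 ≤ ∑ i, partSize B i ^ 2 :=
          sum_sq_partSize_le_of_edgesIn_le hBcard (hopt B hBcard)
      _ = t * m ^ 2 + s * (2 * m + 1) := by
          simp only [hB, apply_ite (· ^ 2), Fin.sum_ite_val_lt hs, smul_eq_mul]
          zify [hs]
          ring
  · have hbound := two_mul_add_one_mul_sum_le univ (partSize A) m
    rw [sum_partSize, hA, card_univ, Fintype.card_fin] at hbound
    nlinarith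

end completeEqPartite

theorem stmt9_general (n p j : ℕ)
    (hj1 : 1 ≤ j) (hj2 : j ≤ n)
    (A : Finset (Fin (2 ^ p) × Fin (2 ^ (n - p))))
    (hcard : A.card = 2 ^ j - 1)
    (hopt : ∀ B : Finset (Fin (2 ^ p) × Fin (2 ^ (n - p))), B.card = A.card →
      edgesIn (completeEqPartite (2 ^ p) (2 ^ (n - p))) B ≤
        edgesIn (completeEqPartite (2 ^ p) (2 ^ (n - p))) A) :
    edgeBoundary (completeEqPartite (2 ^ p) (2 ^ (n - p))) A =
      if j ≤ p then (2 ^ j - 1) * (2 ^ (n - p) * (2 ^ p - 1) - (2 ^ j - 2))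
      else (2 ^ p - 1) * (2 ^ (n - p) * (2 ^ j - 1) - 2 ^ (j - p) * (2 ^ j - 2)) := by
  have hbd := completeEqPartite.edgeBoundary_add_sq_card A
  have hK : 2 ≤ 2 ^ j := Nat.le_self_pow (by omega) 2
  have hT : 1 ≤ 2 ^ p := Nat.one_le_two_pow
  have hR : 1 ≤ 2 ^ (n - p) := Nat.one_le_two_pow
  split_ifs with hjp
  · have hKT : 2 ^ j ≤ 2 ^ p := Nat.pow_le_pow_right two_pos hjp
    rw [completeEqPartite.sum_sq_partSize_of_optimal (m := 0) (s := 2 ^ j - 1) (by omega) hR (by omega) hopt,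
      hcard] at hbd
    have hle : 2 ^ j - 2 ≤ 2 ^ (n - p) * (2 ^ p - 1) :=
      (by omega : 2 ^ j - 2 ≤ 2 ^ p - 1).trans (Nat.le_mul_of_pos_left _ hR)
    zify [hle, hK, hT, hK.trans' one_le_two] at hbd ⊢
    linear_combination hbd
  · have hKTq : 2 ^ j = 2 ^ p * 2 ^ (j - p) := by rw [← pow_add]; congr 1; omega
    have hq : 1 ≤ 2 ^ (j - p) := Nat.one_le_two_pow
    have hqR : 2 ^ (j - p) ≤ 2 ^ (n - p) := Nat.pow_le_pow_right two_pos (by omega)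
    rw [hKTq] at hcard hK ⊢
    have hcard' : #A = 2 ^ p * (2 ^ (j - p) - 1) + (2 ^ p - 1) := by
      rw [hcard]; zify [hq, hT, hK.trans' one_le_two]; ring
    rw [completeEqPartite.sum_sq_partSize_of_optimal (by omega) (by omega) hcard' hopt, hcard] at hbd
    have hle : 2 ^ (j - p) * (2 ^ p * 2 ^ (j - p) - 2) ≤
        2 ^ (n - p) * (2 ^ p * 2 ^ (j - p) - 1) := Nat.mul_le_mul hqR (by omega)
    zify [hle, hq, hT, hK, hK.trans' one_le_two] at hbd ⊢
    linear_combination hbd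

theorem stmt9 (n p j : ℕ) (hp : 2 ≤ p) (hn : 2 ≤ n) (hpn : p ≤ n)
    (hj1 : 1 ≤ j) (hj2 : j ≤ n)
    (A : Finset (Fin (2 ^ p) × Fin (2 ^ (n - p))))
    (hcard : A.card = 2 ^ j - 1)
    (hopt : ∀ B : Finset (Fin (2 ^ p) × Fin (2 ^ (n - p))), B.card = A.card →
      edgesIn (completeEqPartite (2 ^ p) (2 ^ (n - p))) B ≤
        edgesIn (completeEqPartite (2 ^ p) (2 ^ (n - p))) A) :
    edgeBoundary (completeEqPartite (2 ^ p) (2 ^ (n - p))) A =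
      if j ≤ p then (2 ^ j - 1) * (2 ^ (n - p) * (2 ^ p - 1) - (2 ^ j - 2))
      else (2 ^ p - 1) * (2 ^ (n - p) * (2 ^ j - 1) - 2 ^ (j - p) * (2 ^ j - 2)) :=
  stmt9_general n p j hj1 hj2 A hcard hopt
end

section
/- In the 1-rooted sibling tree ST_n^1, for each j with 1 ≤ j ≤ n−1 and each i with 1 ≤ i ≤ 2^{n−j−1}, the set SS consisting of the two tree edges from the i-th vertex (left to right) at level n−j to its two children is an edge cut whose removal disconnects ST_n^1 into exactly two components, one of which has 2(2^j − 1) vertices. -/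
/-- The `1`-rooted sibling tree `ST_n^1` on `2^n` vertices: vertex `0` is the pendant
root (at level `0`), vertices `1, …, 2^n − 1` form a complete binary tree of height `n`
in heap order (children of `x` are `2x` and `2x + 1`; leaves at level `n`), together
with a sibling edge between the two children `2x` and `2x + 1` of each internal vertex
`x ≥ 1`. -/
def rootedSiblingTree (n : ℕ) : SimpleGraph (Fin (2 ^ n)) where
  Adj u v := u ≠ v ∧
    (u.val = 2 * v.val ∨ v.val = 2 * u.val ∨
     u.val = 2 * v.val + 1 ∨ v.val = 2 * u.val + 1 ∨
     (u.val = v.val + 1 ∧ v.val % 2 = 0 ∧ 2 ≤ v.val) ∨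
     (v.val = u.val + 1 ∧ u.val % 2 = 0 ∧ 2 ≤ u.val))
  symm := ⟨by intro u v h; exact ⟨h.1.symm, by tauto⟩⟩
  loopless := ⟨by intro u h; exact h.1 rfl⟩

lemma st18_sib_div (v k : ℕ) (hk : 1 ≤ k) (hv : v % 2 = 0) : (v + 1) / 2 ^ k = v / 2 ^ k := by
  obtain ⟨m, rfl⟩ : ∃ m, k = m + 1 := ⟨k - 1, by omega⟩
  rw [pow_succ', ← Nat.div_div_eq_div_mul, ← Nat.div_div_eq_div_mul]
  congr 1
  omega

lemma st18_div_div (v k : ℕ) : v / 2 / 2 ^ k = v / 2 ^ (k + 1) := by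
  rw [pow_succ', Nat.div_div_eq_div_mul]

lemma st18_sum (J : ℕ) : ∑ k ∈ Finset.Icc 1 J, 2 ^ k = 2 ^ (J + 1) - 2 := by
  induction J with
  | zero => simp
  | succ J ih =>
    rw [Finset.sum_Icc_succ_top (by omega), ih]
    have h1 : (2:ℕ) ^ (J + 2) = 2 * 2 ^ (J + 1) := by ring
    have h2 : (2:ℕ) ≤ 2 ^ (J + 1) := Nat.one_lt_two_pow_iff.2 (by omega)
    omega

/-- In `ST_n^1`, for `1 ≤ j ≤ n−1` and `1 ≤ i ≤ 2^{n−j−1}`, the pair of tree edges from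
the `i`-th vertex (left to right) at level `n−j` to its two children is an edge cut whose
removal disconnects `ST_n^1` into exactly two components, one of which has
`2(2^j − 1)` vertices. -/
theorem stmt18 (n j i : ℕ) (hn : 2 ≤ n) (hj1 : 1 ≤ j) (hj2 : j ≤ n - 1)
    (hi1 : 1 ≤ i) (hi2 : i ≤ 2 ^ (n - j - 1)) :
    ∀ par c1 c2 : Fin (2 ^ n),
      par.val = 2 ^ (n - j - 1) + (i - 1) →
      c1.val = 2 * par.val → c2.val = 2 * par.val + 1 →
      ∃ A : Set (Fin (2 ^ n)), A.ncard = 2 * (2 ^ j - 1) ∧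
        (let G' := (rootedSiblingTree n).deleteEdges {s(par, c1), s(par, c2)}
         (∀ u v, u ∈ A → v ∈ A → G'.Reachable u v) ∧
         (∀ u v, u ∉ A → v ∉ A → G'.Reachable u v) ∧
         (∀ u v, u ∈ A → v ∉ A → ¬ G'.Reachable u v)) := by
  intro par c1 c2 hpar hc1 hc2
  have hjn : j + 1 ≤ n := by omega
  have hpow1 : (0:ℕ) < 2 ^ (n - j - 1) := by positivity
  have hsplit : 2 ^ (n - j - 1) * 2 ^ (j + 1) = 2 ^ n := by
    rw [← pow_add]; congr 1; omega
  have hsplit2 : 2 ^ (n - j) * 2 ^ j = 2 ^ n := by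
    rw [← pow_add]; congr 1; omega
  have hnj2 : 2 ^ (n - j) = 2 * 2 ^ (n - j - 1) := by
    rw [← pow_succ']; congr 1; omega
  have hp1 : 1 ≤ par.val := by omega
  have hpU : par.val + 1 ≤ 2 ^ (n - j) := by omega
  have hplow : 2 ^ (n - j - 1) ≤ par.val := by omega
  set A : Set (Fin (2 ^ n)) := {v | ∃ k, 1 ≤ k ∧ v.val / 2 ^ k = par.val} with hA
  have hmemA : ∀ v : Fin (2 ^ n), v ∈ A ↔ ∃ k, 1 ≤ k ∧ v.val / 2 ^ k = par.val := by
    intro v; rw [hA]; simp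
  have hlb : ∀ (v : Fin (2 ^ n)) (k : ℕ), v.val / 2 ^ k = par.val → par.val * 2 ^ k ≤ v.val := by
    intro v k h
    exact (Nat.le_div_iff_mul_le (by positivity)).1 h.ge
  have hub : ∀ (v : Fin (2 ^ n)) (k : ℕ), v.val / 2 ^ k = par.val →
      v.val < (par.val + 1) * 2 ^ k := by
    intro v k h
    exact (Nat.div_lt_iff_lt_mul (by positivity)).1 (by omega)
  have hkle : ∀ (v : Fin (2 ^ n)) (k : ℕ), 1 ≤ k → v.val / 2 ^ k = par.val → k ≤ j := by
    intro v k hk h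
    by_contra hcon
    have h1 := hlb v k h
    have h2 : 2 ^ (n - j - 1) * 2 ^ (j + 1) ≤ par.val * 2 ^ k :=
      Nat.mul_le_mul hplow (Nat.pow_le_pow_right (by norm_num) (by omega))
    have h3 := v.isLt
    omega
  have hparA : par ∉ A := by
    rw [hmemA]
    rintro ⟨k, hk, he⟩
    have h1 := hlb par k he
    have h2 : (2:ℕ) ≤ 2 ^ k := Nat.one_lt_two_pow_iff.2 (by omega)
    have h3 : par.val * 2 ≤ par.val * 2 ^ k := Nat.mul_le_mul le_rfl h2
    omega
  have hA2 : ∀ v : Fin (2 ^ n), v ∈ A → 2 ≤ v.val := by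
    intro v hv
    rw [hmemA] at hv
    obtain ⟨k, hk, he⟩ := hv
    have h1 := hlb v k he
    have h2 : (2:ℕ) ≤ 2 ^ k := Nat.one_lt_two_pow_iff.2 (by omega)
    have h3 : par.val * 2 ≤ par.val * 2 ^ k := Nat.mul_le_mul le_rfl h2
    omega
  have hup : ∀ u v : Fin (2 ^ n), u.val = v.val / 2 → u ∈ A → v ∈ A := by
    intro u v huv hu
    rw [hmemA] at hu ⊢
    obtain ⟨k, hk, he⟩ := hu
    exact ⟨k + 1, by omega, by rw [← st18_div_div, ← huv]; exact he⟩
  have hdown : ∀ u v : Fin (2 ^ n), u.val = v.val / 2 → v ∈ A → v.val / 2 ≠ par.val → u ∈ A := by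
    intro u v huv hv hne
    rw [hmemA] at hv ⊢
    obtain ⟨k, hk, he⟩ := hv
    rcases Nat.lt_or_ge k 2 with hk2 | hk2
    · exfalso
      apply hne
      have hk1 : k = 1 := by omega
      subst hk1
      simpa using he
    · refine ⟨k - 1, by omega, ?_⟩
      rw [huv, st18_div_div, show k - 1 + 1 = k from by omega]
      exact he
  have hsib : ∀ u v : Fin (2 ^ n), u.val = v.val + 1 → v.val % 2 = 0 → (u ∈ A ↔ v ∈ A) := by
    intro u v huv hv
    rw [hmemA, hmemA]
    constructor
    · rintro ⟨k, hk, he⟩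
      exact ⟨k, hk, by rw [← st18_sib_div v k hk hv, ← huv]; exact he⟩
    · rintro ⟨k, hk, he⟩
      exact ⟨k, hk, by rw [huv, st18_sib_div v k hk hv]; exact he⟩
  have hc1A : c1 ∈ A := by
    rw [hmemA]
    exact ⟨1, le_rfl, by rw [pow_one]; omega⟩
  have hc2A : c2 ∈ A := by
    rw [hmemA]
    exact ⟨1, le_rfl, by rw [pow_one]; omega⟩
  -- adjacency helpers
  have hadj_iff : ∀ u v : Fin (2 ^ n), (rootedSiblingTree n).Adj u v ↔ (u ≠ v ∧
      (u.val = 2 * v.val ∨ v.val = 2 * u.val ∨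
       u.val = 2 * v.val + 1 ∨ v.val = 2 * u.val + 1 ∨
       (u.val = v.val + 1 ∧ v.val % 2 = 0 ∧ 2 ≤ v.val) ∨
       (v.val = u.val + 1 ∧ u.val % 2 = 0 ∧ 2 ≤ u.val))) := fun _ _ => Iff.rfl
  have hedge : ∀ u v : Fin (2 ^ n),
      s(u, v) ∈ ({s(par, c1), s(par, c2)} : Set (Sym2 (Fin (2 ^ n)))) ↔
      ((u = par ∧ v = c1) ∨ (u = c1 ∧ v = par) ∨ (u = par ∧ v = c2) ∨ (u = c2 ∧ v = par)) := by
    intro u v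
    simp only [Set.mem_insert_iff, Set.mem_singleton_iff, Sym2.eq_iff]
    tauto
  have hadjG' : ∀ u v : Fin (2 ^ n),
      (u.val = 2 * v.val ∨ v.val = 2 * u.val ∨
       u.val = 2 * v.val + 1 ∨ v.val = 2 * u.val + 1 ∨
       (u.val = v.val + 1 ∧ v.val % 2 = 0 ∧ 2 ≤ v.val) ∨
       (v.val = u.val + 1 ∧ u.val % 2 = 0 ∧ 2 ≤ u.val)) →
      u.val ≠ v.val →
      ¬(u.val = par.val ∧ v.val = c1.val) → ¬(u.val = c1.val ∧ v.val = par.val) →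
      ¬(u.val = par.val ∧ v.val = c2.val) → ¬(u.val = c2.val ∧ v.val = par.val) →
      ((rootedSiblingTree n).deleteEdges {s(par, c1), s(par, c2)}).Adj u v := by
    intro u v hbase hne h1 h2 h3 h4
    rw [SimpleGraph.deleteEdges_adj]
    refine ⟨(hadj_iff u v).2 ⟨fun h => hne (congrArg Fin.val h), hbase⟩, fun hm => ?_⟩
    rcases (hedge u v).1 hm with ⟨a, b⟩ | ⟨a, b⟩ | ⟨a, b⟩ | ⟨a, b⟩
    · exact h1 ⟨congrArg Fin.val a, congrArg Fin.val b⟩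
    · exact h2 ⟨congrArg Fin.val a, congrArg Fin.val b⟩
    · exact h3 ⟨congrArg Fin.val a, congrArg Fin.val b⟩
    · exact h4 ⟨congrArg Fin.val a, congrArg Fin.val b⟩
  have hn0 : 0 < 2 ^ n := by positivity
  -- reachability within A to c1
  have hreachA : ∀ (m : ℕ) (v : Fin (2 ^ n)), v.val ≤ m → v ∈ A →
      ((rootedSiblingTree n).deleteEdges {s(par, c1), s(par, c2)}).Reachable v c1 := by
    intro m
    induction m with
    | zero => intro v hv hvA; exact absurd (hA2 v hvA) (by omega)
    | succ m ih =>
      intro v hv hvA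
      by_cases h1 : v = c1
      · subst h1; exact SimpleGraph.Reachable.refl _
      by_cases h2 : v = c2
      · have hv2 : v.val = 2 * par.val + 1 := by rw [h2]; exact hc2
        refine (hadjG' v c1 ?_ ?_ ?_ ?_ ?_ ?_).reachable <;> omega
      · have hne : v.val / 2 ≠ par.val := by
          intro hh
          have hx : v.val = 2 * par.val ∨ v.val = 2 * par.val + 1 := by omega
          rcases hx with hx | hx
          · exact h1 (Fin.val_injective (by omega))
          · exact h2 (Fin.val_injective (by omega))
        have hvlt : v.val / 2 < 2 ^ n := lt_of_le_of_lt (Nat.div_le_self _ _) v.isLt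
        have h2v := hA2 v hvA
        set w : Fin (2 ^ n) := ⟨v.val / 2, hvlt⟩ with hw
        have hwval : w.val = v.val / 2 := rfl
        have hwA : w ∈ A := hdown w v hwval hvA hne
        have hadj : ((rootedSiblingTree n).deleteEdges {s(par, c1), s(par, c2)}).Adj v w := by
          apply hadjG' v w <;> omega
        exact hadj.reachable.trans (ih w (by omega) hwA)
  -- reachability outside A to vertex 0
  have hreachZ : ∀ (m : ℕ) (v : Fin (2 ^ n)), v.val ≤ m → v ∉ A →
      ((rootedSiblingTree n).deleteEdges {s(par, c1), s(par, c2)}).Reachable v ⟨0, hn0⟩ := by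
    intro m
    induction m with
    | zero =>
      intro v hv _
      have : v = ⟨0, hn0⟩ := by
        apply Fin.val_injective
        show v.val = 0
        omega
      subst this; exact SimpleGraph.Reachable.refl _
    | succ m ih =>
      intro v hv hvA
      by_cases h0 : v.val = 0
      · have : v = ⟨0, hn0⟩ := by
          apply Fin.val_injective
          show v.val = 0
          omega
        subst this; exact SimpleGraph.Reachable.refl _
      by_cases h1 : v.val = 1
      · have hzval : (⟨0, hn0⟩ : Fin (2 ^ n)).val = 0 := rfl
        refine (hadjG' v ⟨0, hn0⟩ ?_ ?_ ?_ ?_ ?_ ?_).reachable <;> omega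
      · have hne : v.val / 2 ≠ par.val := by
          intro hh
          exact hvA ((hmemA v).2 ⟨1, le_rfl, by rw [pow_one]; exact hh⟩)
        have hvlt : v.val / 2 < 2 ^ n := lt_of_le_of_lt (Nat.div_le_self _ _) v.isLt
        set w : Fin (2 ^ n) := ⟨v.val / 2, hvlt⟩ with hw
        have hwval : w.val = v.val / 2 := rfl
        have hwA : w ∉ A := fun h => hvA (hup w v hwval h)
        have hadj : ((rootedSiblingTree n).deleteEdges {s(par, c1), s(par, c2)}).Adj v w := by
          apply hadjG' v w <;> omega
        exact hadj.reachable.trans (ih w (by omega) hwA)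
  -- the key invariant: adjacency in G' preserves membership in A
  have hkey : ∀ u v : Fin (2 ^ n),
      ((rootedSiblingTree n).deleteEdges {s(par, c1), s(par, c2)}).Adj u v → u ∈ A → v ∈ A := by
    intro u v huv huA
    rw [SimpleGraph.deleteEdges_adj] at huv
    obtain ⟨hGadj, hnd⟩ := huv
    obtain ⟨hne, hcases⟩ := (hadj_iff u v).1 hGadj
    have hnd' : ¬((u = par ∧ v = c1) ∨ (u = c1 ∧ v = par) ∨
        (u = par ∧ v = c2) ∨ (u = c2 ∧ v = par)) := fun h => hnd ((hedge u v).2 h)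
    rcases hcases with h | h | h | h | h | h
    · refine hdown v u (by omega) huA (fun hh => ?_)
      have hv : v = par := Fin.val_injective (by omega)
      have hu : u = c1 := Fin.val_injective (by omega)
      exact hnd' (Or.inr (Or.inl ⟨hu, hv⟩))
    · exact hup u v (by omega) huA
    · refine hdown v u (by omega) huA (fun hh => ?_)
      have hv : v = par := Fin.val_injective (by omega)
      have hu : u = c2 := Fin.val_injective (by omega)
      exact hnd' (Or.inr (Or.inr (Or.inr ⟨hu, hv⟩)))
    · exact hup u v (by omega) huA
    · exact (hsib u v h.1 h.2.1).1 huA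
    · exact (hsib v u h.1 h.2.1).2 huA
  have hwalkinv : ∀ (u v : Fin (2 ^ n)),
      ((rootedSiblingTree n).deleteEdges {s(par, c1), s(par, c2)}).Walk u v → u ∈ A → v ∈ A := by
    intro u v w
    induction w with
    | nil => exact id
    | cons h _ ih => exact fun ha => ih (hkey _ _ h ha)
  -- cardinality of A
  have hAcard : A.ncard = 2 * (2 ^ j - 1) := by
    have himg : Fin.val '' A =
        ↑((Finset.Icc 1 j).biUnion fun k =>
          Finset.Ico (par.val * 2 ^ k) (par.val * 2 ^ k + 2 ^ k)) := by
      ext m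
      simp only [Set.mem_image, Finset.coe_biUnion, Set.mem_iUnion, Finset.mem_coe,
        Finset.mem_Ico, Finset.mem_Icc, hA, Set.mem_setOf_eq]
      constructor
      · rintro ⟨v, ⟨k, hk, he⟩, rfl⟩
        refine ⟨k, ⟨hk, hkle v k hk he⟩, hlb v k he, ?_⟩
        have h1 := hub v k he
        have h2 : (par.val + 1) * 2 ^ k = par.val * 2 ^ k + 2 ^ k := by ring
        omega
      · rintro ⟨k, ⟨hk1, hk2⟩, hlo, hhi⟩
        have hkk : (par.val + 1) * 2 ^ k ≤ 2 ^ (n - j) * 2 ^ j :=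
          Nat.mul_le_mul hpU (Nat.pow_le_pow_right (by norm_num) hk2)
        have hx : (par.val + 1) * 2 ^ k = par.val * 2 ^ k + 2 ^ k := by ring
        have hmn : m < 2 ^ n := by omega
        have hpos : (0:ℕ) < 2 ^ k := by positivity
        have h1 : par.val ≤ m / 2 ^ k := (Nat.le_div_iff_mul_le hpos).2 hlo
        have h2 : m / 2 ^ k < par.val + 1 := (Nat.div_lt_iff_lt_mul hpos).2 (by omega)
        refine ⟨⟨m, hmn⟩, ⟨k, hk1, ?_⟩, rfl⟩
        show m / 2 ^ k = par.val
        omega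
    have hdisj : ∀ x ∈ Finset.Icc 1 j, ∀ y ∈ Finset.Icc 1 j, x ≠ y →
        Disjoint (Finset.Ico (par.val * 2 ^ x) (par.val * 2 ^ x + 2 ^ x))
          (Finset.Ico (par.val * 2 ^ y) (par.val * 2 ^ y + 2 ^ y)) := by
      have key : ∀ x y : ℕ, x < y →
          Disjoint (Finset.Ico (par.val * 2 ^ x) (par.val * 2 ^ x + 2 ^ x))
            (Finset.Ico (par.val * 2 ^ y) (par.val * 2 ^ y + 2 ^ y)) := by
        intro x y hxy
        rw [Finset.disjoint_left]
        intro a ha hb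
        rw [Finset.mem_Ico] at ha hb
        have h1 : par.val * 2 ^ x + 2 ^ x ≤ par.val * 2 ^ y := by
          calc par.val * 2 ^ x + 2 ^ x = (par.val + 1) * 2 ^ x := by ring
            _ ≤ (par.val + par.val) * 2 ^ x := Nat.mul_le_mul (by omega) le_rfl
            _ = par.val * 2 ^ (x + 1) := by ring
            _ ≤ par.val * 2 ^ y :=
                Nat.mul_le_mul le_rfl (Nat.pow_le_pow_right (by norm_num) (by omega))
        omega
      intro x hx y hy hne
      rcases Nat.lt_or_ge x y with h | h
      · exact key x y h
      · exact (key y x (by omega)).symm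
    have hcard1 : A.ncard = (Fin.val '' A).ncard :=
      (Set.ncard_image_of_injective A Fin.val_injective).symm
    rw [hcard1, himg, Set.ncard_coe_finset, Finset.card_biUnion hdisj]
    have hconv : ∀ k ∈ Finset.Icc 1 j,
        (Finset.Ico (par.val * 2 ^ k) (par.val * 2 ^ k + 2 ^ k)).card = 2 ^ k := by
      intro k _
      rw [Nat.card_Ico, Nat.add_sub_cancel_left]
    rw [Finset.sum_congr rfl hconv, st18_sum j]
    have h1 : (2:ℕ) ^ (j + 1) = 2 * 2 ^ j := by ring
    have h2 : (1:ℕ) ≤ 2 ^ j := Nat.one_le_two_pow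
    omega
  refine ⟨A, hAcard,
    fun u v hu hv => (hreachA u.val u le_rfl hu).trans (hreachA v.val v le_rfl hv).symm,
    fun u v hu hv => (hreachZ u.val u le_rfl hu).trans (hreachZ v.val v le_rfl hv).symm,
    fun u v hu hv hr => hv (hr.elim fun w => hwalkinv u v w hu)⟩
end
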